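/- Let (t_k) be a sequence of positive reals with t_k → 0, for each k let (x^k,y^k) be a Karush–Kuhn–Tucker point of the Scholtes-type regularization S(t_k), and suppose (x^k,y^k) → (x̄,ȳ) where (x̄,ȳ) is a nondegenerate T-stationary point of the regularized continuous reformulation R with (unique) multipliers (λ̄,μ̄,σ̄,ϱ̄). Then for all sufficiently large k it holds a01(x̄,ȳ) \ H(x^k,y^k) ⊆ {i ∈ a01(x̄,ȳ) : σ̄_{1,i} = 0}; in particular, every index i ∈ a01(x̄,ȳ) with σ̄_{1,i} ≠ 0 belongs to H(x^k,y^k) for all sufficiently large k. -/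

import Mathlib

open scoped Classical
open Finset Filter Topology

noncomputable section
namespace Scholtes

/-- Vectors in ℝⁿ. -/
abbrev Vec (n : ℕ) := Fin n → ℝ

variable {n : ℕ} {P Q : Type*} [Fintype P] [Fintype Q]

/-- Euclidean dot product. -/
def dot (u v : Vec n) : ℝ := ∑ i, u i * v i

/-- Gradient: vector of partial derivatives. -/
def grad (f : Vec n → ℝ) (x : Vec n) : Vec n := fun i => fderiv ℝ f x (Pi.single i 1)

/-- Hessian bilinear form of `L` at `z`, evaluated at directions `ξ`, `ζ`. -/
def hess (L : Vec n × Vec n → ℝ) (z ξ ζ : Vec n × Vec n) : ℝ :=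
  fderiv ℝ (fun w => fderiv ℝ L w ξ) z ζ

/-- The pair vector (e_i, 0) ∈ ℝ²ⁿ. -/
def ex (i : Fin n) : Vec n × Vec n := (Pi.single i 1, 0)

/-- The pair vector (0, e_i) ∈ ℝ²ⁿ. -/
def ey (i : Fin n) : Vec n × Vec n := (0, Pi.single i 1)

/-- The pair vector (0, e) ∈ ℝ²ⁿ, where e is the all-ones vector. -/
def eAll : Vec n × Vec n := (0, fun _ => 1)

/-- The pair vector (y_i e_i, x_i e_i) ∈ ℝ²ⁿ. -/
def hvec (x y : Vec n) (i : Fin n) : Vec n × Vec n := (Pi.single i (y i), Pi.single i (x i))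

/-- The number of negative eigenvalues of the bilinear form `B` restricted to the
(sub)space `T`, expressed as the maximal dimension of a linear subspace of `T` on
which the associated quadratic form is negative definite. -/
def negIndex (B : (Vec n × Vec n) → (Vec n × Vec n) → ℝ) (T : (Vec n × Vec n) → Prop) : ℕ :=
  sSup {d : ℕ | ∃ W : Submodule ℝ (Vec n × Vec n),
    (∀ ξ ∈ W, T ξ) ∧ Module.finrank ℝ W = d ∧ ∀ ξ ∈ W, ξ ≠ 0 → B ξ ξ < 0}

/-- The data and standing assumptions of the paper: objective `f`, equality
constraints `h`, inequality constraints `g`, positive pairwise different linear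
coefficients `c`, cardinality bound `s` and regularization parameter `ε`. -/
structure Setting (n : ℕ) (P Q : Type*) [Fintype P] [Fintype Q] where
  f : Vec n → ℝ
  h : P → Vec n → ℝ
  g : Q → Vec n → ℝ
  c : Vec n
  s : ℕ
  ε : ℝ
  hn : 1 ≤ n
  hf : ContDiff ℝ 2 f
  hh : ∀ p, ContDiff ℝ 2 (h p)
  hg : ∀ q, ContDiff ℝ 2 (g q)
  hcpos : ∀ i, 0 < c i
  hcinj : Function.Injective c
  hs : s < n
  hεpos : 0 < ε
  hεle : ε ≤ 1 / ((n : ℝ) - s)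

/-- Index set a01: x̄_i = 0, ȳ_i > 0. -/
def a01 (x y : Vec n) : Finset (Fin n) := univ.filter fun i => x i = 0 ∧ 0 < y i

/-- Index set a10: x̄_i ≠ 0, ȳ_i = 0. -/
def a10 (x y : Vec n) : Finset (Fin n) := univ.filter fun i => x i ≠ 0 ∧ y i = 0

/-- Index set a00: x̄_i = 0, ȳ_i = 0. -/
def a00 (x y : Vec n) : Finset (Fin n) := univ.filter fun i => x i = 0 ∧ y i = 0

/-- Index set N(y): y_i = 0. -/
def Nact (y : Vec n) : Finset (Fin n) := univ.filter fun i => y i = 0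

/-- Index set H≥(x,y): x_i y_i = −t. -/
def Hge (t : ℝ) (x y : Vec n) : Finset (Fin n) := univ.filter fun i => x i * y i = -t

/-- Index set H≤(x,y): x_i y_i = t. -/
def Hle (t : ℝ) (x y : Vec n) : Finset (Fin n) := univ.filter fun i => x i * y i = t

/-- Index set H(x,y) = H≥ ∪ H≤. -/
def Hact (t : ℝ) (x y : Vec n) : Finset (Fin n) := Hge t x y ∪ Hle t x y

/-- Active inequality constraints Q0(x). -/
def Q0 (D : Setting n P Q) (x : Vec n) : Finset Q := univ.filter fun q => D.g q x = 0

/-- Active upper bounds E(y): y_i = 1 + ε. -/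
def Eact (D : Setting n P Q) (y : Vec n) : Finset (Fin n) := univ.filter fun i => y i = 1 + D.ε

/-- Index set O(x,y) = complement of E(y) ∪ N(y) ∪ H(x,y). -/
def Oact (D : Setting n P Q) (t : ℝ) (x y : Vec n) : Finset (Fin n) :=
  (Eact D y ∪ Nact y ∪ Hact t x y)ᶜ

/-- Feasibility for the regularized continuous reformulation R. -/
def feasR (D : Setting n P Q) (x y : Vec n) : Prop :=
  (∀ p, D.h p x = 0) ∧ (∀ q, 0 ≤ D.g q x) ∧ ((n : ℝ) - D.s ≤ ∑ i, y i) ∧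
  (∀ i, x i * y i = 0) ∧ (∀ i, 0 ≤ y i ∧ y i ≤ 1 + D.ε)

/-- Feasibility for the Scholtes-type regularization S(t). -/
def feasS (D : Setting n P Q) (t : ℝ) (x y : Vec n) : Prop :=
  (∀ p, D.h p x = 0) ∧ (∀ q, 0 ≤ D.g q x) ∧ ((n : ℝ) - D.s ≤ ∑ i, y i) ∧
  (∀ i, -t ≤ x i * y i ∧ x i * y i ≤ t) ∧ (∀ i, 0 ≤ y i ∧ y i ≤ 1 + D.ε)

/-- Multipliers for T-stationarity (defined on the whole index ranges). -/
structure TMult (n : ℕ) (P Q : Type*) where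
  lam : P → ℝ
  mu1 : Q → ℝ
  mu2 : Fin n → ℝ
  mu3 : ℝ
  sig1 : Fin n → ℝ
  sig2 : Fin n → ℝ
  rho1 : Fin n → ℝ
  rho2 : Fin n → ℝ

/-- The T-stationarity equation (1) of Definition 2. -/
def TStatEq (D : Setting n P Q) (x y : Vec n) (M : TMult n P Q) : Prop :=
  ((grad D.f x, D.c) : Vec n × Vec n) =
    (∑ p, M.lam p • ((grad (D.h p) x, (0 : Vec n)) : Vec n × Vec n))
    + (∑ q ∈ Q0 D x, M.mu1 q • ((grad (D.g q) x, (0 : Vec n)) : Vec n × Vec n))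
    - (∑ i ∈ Eact D y, M.mu2 i • ey i)
    + M.mu3 • eAll
    + (∑ i ∈ a01 x y, M.sig1 i • ex i)
    + (∑ i ∈ a10 x y, M.sig2 i • ey i)
    + (∑ i ∈ a00 x y, (M.rho1 i • ex i + M.rho2 i • ey i))

/-- (x,y) is a T-stationary point of R with multipliers M. -/
def TStatAt (D : Setting n P Q) (x y : Vec n) (M : TMult n P Q) : Prop :=
  feasR D x y ∧
  (∀ q ∈ Q0 D x, 0 ≤ M.mu1 q) ∧
  (∀ i ∈ Eact D y, 0 ≤ M.mu2 i) ∧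
  0 ≤ M.mu3 ∧
  M.mu3 * ((∑ i, y i) - ((n : ℝ) - D.s)) = 0 ∧
  (∀ i ∈ a00 x y, M.rho1 i = 0 ∨ M.rho2 i ≤ 0) ∧
  TStatEq D x y M

/-- (x,y) is a T-stationary point of R. -/
def TStat (D : Setting n P Q) (x y : Vec n) : Prop := ∃ M, TStatAt D x y M

/-- MPOC-tailored LICQ at a feasible point (x,y) of R: the indicated family of
vectors in ℝ²ⁿ is linearly independent. -/
def MPOC_LICQ (D : Setting n P Q) (x y : Vec n) : Prop :=
  ∀ (lam : P → ℝ) (mu1 : Q → ℝ) (mu2 : Fin n → ℝ) (mu3 : ℝ) (s1 s2 : Fin n → ℝ),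
    ((∑ i, y i) ≠ (n : ℝ) - D.s → mu3 = 0) →
    (∑ p, lam p • ((grad (D.h p) x, (0 : Vec n)) : Vec n × Vec n))
    + (∑ q ∈ Q0 D x, mu1 q • ((grad (D.g q) x, (0 : Vec n)) : Vec n × Vec n))
    + (∑ i ∈ Eact D y, mu2 i • ey i)
    + mu3 • eAll
    + (∑ i ∈ a01 x y ∪ a00 x y, s1 i • ex i)
    + (∑ i ∈ a10 x y ∪ a00 x y, s2 i • ey i) = 0 →
    (∀ p, lam p = 0) ∧ (∀ q ∈ Q0 D x, mu1 q = 0) ∧ (∀ i ∈ Eact D y, mu2 i = 0) ∧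
    mu3 = 0 ∧ (∀ i ∈ a01 x y ∪ a00 x y, s1 i = 0) ∧ (∀ i ∈ a10 x y ∪ a00 x y, s2 i = 0)

/-- The Lagrange function L^R associated with the T-stationary point (x̄,ȳ)
and multipliers M. -/
def LagR (D : Setting n P Q) (xb yb : Vec n) (M : TMult n P Q) (z : Vec n × Vec n) : ℝ :=
  D.f z.1 + dot D.c z.2
    - (∑ p, M.lam p * D.h p z.1)
    - (∑ q ∈ Q0 D xb, M.mu1 q * D.g q z.1)
    + (∑ i ∈ Eact D yb, M.mu2 i * (z.2 i - (1 + D.ε)))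
    - M.mu3 * ((∑ i, z.2 i) - ((n : ℝ) - D.s))
    - (∑ i ∈ a01 xb yb, M.sig1 i * z.1 i)
    - (∑ i ∈ a10 xb yb, M.sig2 i * z.2 i)
    - (∑ i ∈ a00 xb yb, (M.rho1 i * z.1 i + M.rho2 i * z.2 i))

/-- Membership in the tangent space T^R at (x̄,ȳ). -/
def inTR (D : Setting n P Q) (x y : Vec n) (ξ : Vec n × Vec n) : Prop :=
  (∀ p, dot (grad (D.h p) x) ξ.1 = 0) ∧
  (∀ q ∈ Q0 D x, dot (grad (D.g q) x) ξ.1 = 0) ∧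
  (∀ i ∈ Eact D y, ξ.2 i = 0) ∧
  ((∑ i, y i) = (n : ℝ) - D.s → (∑ i, ξ.2 i) = 0) ∧
  (∀ i ∈ a00 x y ∪ a01 x y, ξ.1 i = 0) ∧
  (∀ i ∈ a00 x y ∪ a10 x y, ξ.2 i = 0)

/-- Nondegenerate T-stationary point with multipliers M (NDT1–NDT4). -/
def NondegTStatAt (D : Setting n P Q) (x y : Vec n) (M : TMult n P Q) : Prop :=
  TStatAt D x y M ∧
  MPOC_LICQ D x y ∧
  (∀ q ∈ Q0 D x, 0 < M.mu1 q) ∧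
  (∀ i ∈ Eact D y, 0 < M.mu2 i) ∧
  ((∑ i, y i) = (n : ℝ) - D.s → 0 < M.mu3) ∧
  (∀ i ∈ a00 x y, M.rho1 i ≠ 0 ∧ M.rho2 i < 0) ∧
  (∀ ξ, inTR D x y ξ → (∀ ζ, inTR D x y ζ → hess (LagR D x y M) (x, y) ξ ζ = 0) → ξ = 0)

/-- T-index: quadratic index (number of negative eigenvalues of the restricted
Hessian of L^R) plus the biactive index |a00|. -/
def TIndex (D : Setting n P Q) (x y : Vec n) (M : TMult n P Q) : ℕ :=
  negIndex (hess (LagR D x y M) (x, y)) (inTR D x y) + (a00 x y).card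

/-- Multipliers for KKT points of S(t) (defined on the whole index ranges). -/
structure SMult (n : ℕ) (P Q : Type*) where
  lam : P → ℝ
  mu1 : Q → ℝ
  mu2 : Fin n → ℝ
  mu3 : ℝ
  etaGe : Fin n → ℝ
  etaLe : Fin n → ℝ
  nu : Fin n → ℝ

/-- The KKT equation for S(t). -/
def KKTEq (D : Setting n P Q) (t : ℝ) (x y : Vec n) (M : SMult n P Q) : Prop :=
  ((grad D.f x, D.c) : Vec n × Vec n) =
    (∑ p, M.lam p • ((grad (D.h p) x, (0 : Vec n)) : Vec n × Vec n))
    + (∑ q ∈ Q0 D x, M.mu1 q • ((grad (D.g q) x, (0 : Vec n)) : Vec n × Vec n))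
    - (∑ i ∈ Eact D y, M.mu2 i • ey i)
    + M.mu3 • eAll
    + (∑ i ∈ Hge t x y, M.etaGe i • hvec x y i)
    - (∑ i ∈ Hle t x y, M.etaLe i • hvec x y i)
    + (∑ i ∈ Nact y, M.nu i • ey i)

/-- (x,y) is a KKT point of S(t) with multipliers M. -/
def KKTAt (D : Setting n P Q) (t : ℝ) (x y : Vec n) (M : SMult n P Q) : Prop :=
  feasS D t x y ∧
  (∀ q ∈ Q0 D x, 0 ≤ M.mu1 q) ∧
  (∀ i ∈ Eact D y, 0 ≤ M.mu2 i) ∧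
  0 ≤ M.mu3 ∧
  M.mu3 * ((∑ i, y i) - ((n : ℝ) - D.s)) = 0 ∧
  (∀ i ∈ Hge t x y, 0 ≤ M.etaGe i) ∧
  (∀ i ∈ Hle t x y, 0 ≤ M.etaLe i) ∧
  (∀ i ∈ Nact y, 0 ≤ M.nu i) ∧
  KKTEq D t x y M

/-- (x,y) is a KKT point of S(t). -/
def KKT (D : Setting n P Q) (t : ℝ) (x y : Vec n) : Prop := ∃ M, KKTAt D t x y M

/-- LICQ at a feasible point (x,y) of S(t). -/
def LICQ (D : Setting n P Q) (t : ℝ) (x y : Vec n) : Prop :=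
  ∀ (lam : P → ℝ) (mu1 : Q → ℝ) (mu2 : Fin n → ℝ) (mu3 : ℝ) (eta nu : Fin n → ℝ),
    ((∑ i, y i) ≠ (n : ℝ) - D.s → mu3 = 0) →
    (∑ p, lam p • ((grad (D.h p) x, (0 : Vec n)) : Vec n × Vec n))
    + (∑ q ∈ Q0 D x, mu1 q • ((grad (D.g q) x, (0 : Vec n)) : Vec n × Vec n))
    + (∑ i ∈ Eact D y, mu2 i • ey i)
    + mu3 • eAll
    + (∑ i ∈ Hact t x y, eta i • hvec x y i)
    + (∑ i ∈ Nact y, nu i • ey i) = 0 →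
    (∀ p, lam p = 0) ∧ (∀ q ∈ Q0 D x, mu1 q = 0) ∧ (∀ i ∈ Eact D y, mu2 i = 0) ∧
    mu3 = 0 ∧ (∀ i ∈ Hact t x y, eta i = 0) ∧ (∀ i ∈ Nact y, nu i = 0)

/-- The Lagrange function L^S associated with the KKT point (x̄,ȳ) of S(t)
and multipliers M. -/
def LagS (D : Setting n P Q) (t : ℝ) (xb yb : Vec n) (M : SMult n P Q)
    (z : Vec n × Vec n) : ℝ :=
  D.f z.1 + dot D.c z.2
    - (∑ p, M.lam p * D.h p z.1)
    - (∑ q ∈ Q0 D xb, M.mu1 q * D.g q z.1)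
    + (∑ i ∈ Eact D yb, M.mu2 i * (z.2 i - (1 + D.ε)))
    - M.mu3 * ((∑ i, z.2 i) - ((n : ℝ) - D.s))
    - (∑ i ∈ Hge t xb yb, M.etaGe i * (z.1 i * z.2 i + t))
    + (∑ i ∈ Hle t xb yb, M.etaLe i * (z.1 i * z.2 i - t))
    - (∑ i ∈ Nact yb, M.nu i * z.2 i)

/-- Membership in the tangent space T^S at (x,y) for S(t). -/
def inTS (D : Setting n P Q) (t : ℝ) (x y : Vec n) (ξ : Vec n × Vec n) : Prop :=
  (∀ p, dot (grad (D.h p) x) ξ.1 = 0) ∧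
  (∀ q ∈ Q0 D x, dot (grad (D.g q) x) ξ.1 = 0) ∧
  (∀ i ∈ Eact D y, ξ.2 i = 0) ∧
  ((∑ i, y i) = (n : ℝ) - D.s → (∑ i, ξ.2 i) = 0) ∧
  (∀ i ∈ Hact t x y, y i * ξ.1 i + x i * ξ.2 i = 0) ∧
  (∀ i ∈ Nact y, ξ.2 i = 0)

/-- Nondegenerate KKT point of S(t) with multipliers M (ND1–ND3). -/
def NondegKKTAt (D : Setting n P Q) (t : ℝ) (x y : Vec n) (M : SMult n P Q) : Prop :=
  KKTAt D t x y M ∧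
  LICQ D t x y ∧
  (∀ q ∈ Q0 D x, 0 < M.mu1 q) ∧
  (∀ i ∈ Eact D y, 0 < M.mu2 i) ∧
  (∀ i ∈ Hge t x y, 0 < M.etaGe i) ∧
  (∀ i ∈ Hle t x y, 0 < M.etaLe i) ∧
  (∀ i ∈ Nact y, 0 < M.nu i) ∧
  ((∑ i, y i) = (n : ℝ) - D.s → 0 < M.mu3) ∧
  (∀ ξ, inTS D t x y ξ → (∀ ζ, inTS D t x y ζ → hess (LagS D t x y M) (x, y) ξ ζ = 0) → ξ = 0)

/-- Quadratic index of a KKT point of S(t): number of negative eigenvalues of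
the restricted Hessian of L^S. -/
def QIdx (D : Setting n P Q) (t : ℝ) (x y : Vec n) (M : SMult n P Q) : ℕ :=
  negIndex (hess (LagS D t x y M) (x, y)) (inTS D t x y)

end Scholtes

/-!
Along the sequence, the KKT multipliers of `S(tₖ)` assemble into a multiplier vector for the
gradients of the active constraints of `R` at `(x̄, ȳ)`, up to an error that is small relative to
the vector itself: the gradients at `xᵏ` are close to those at `x̄`, and the complementarity
gradient `(yᵢ eᵢ, xᵢ eᵢ)` points essentially in the direction active at the limit, its other
component being smaller by the factor `yᵢ / xᵢ` (for `i ∈ a10`) or `xᵢ / yᵢ` (for `i ∈ a01`).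
By MPOC-LICQ the limit linear map is injective on the admissible multipliers, so these vectors
converge to the T-stationarity multipliers. For `i ∈ a01` the coordinate `ηᵢ yᵢ` therefore tends
to `σ̄₁ᵢ`, while it vanishes whenever `i ∉ H(xᵏ, yᵏ)`.
-/

namespace Scholtes

variable {n : ℕ} {P Q : Type*}

theorem tendsto_of_norm_map_sub_le {E F ι : Type*} [NormedAddCommGroup E] [NormedSpace ℝ E]
    [FiniteDimensional ℝ E] [NormedAddCommGroup F] [NormedSpace ℝ F]
    {A : E →ₗ[ℝ] F} {W : Submodule ℝ E} (hA : ∀ z ∈ W, A z = 0 → z = 0)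
    {l : Filter ι} {z : ι → E} {zb : E} {δ ε : ι → ℝ}
    (hδ : Tendsto δ l (𝓝 0)) (hε : Tendsto ε l (𝓝 0)) (hε0 : ∀ k, 0 ≤ ε k)
    (hz : ∀ᶠ k in l, z k ∈ W) (hzb : zb ∈ W)
    (hbound : ∀ᶠ k in l, ‖A (z k) - A zb‖ ≤ δ k + ε k * ‖z k‖) :
    Tendsto z l (𝓝 zb) := by
  obtain ⟨K, -, hK⟩ := (A.domRestrict W).exists_antilipschitzWith <| by
    rw [LinearMap.ker_eq_bot']
    exact fun w hw => Subtype.ext (hA w w.2 hw)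
  have hC : ∀ w ∈ W, ‖w‖ ≤ K * ‖A w‖ := fun w hw =>
    ZeroHomClass.bound_of_antilipschitz (A.domRestrict W) hK ⟨w, hw⟩
  have hsmall : ∀ᶠ k in l, K * ε k ≤ 1 / 2 := by
    have : Tendsto (fun k => K * ε k) l (𝓝 0) := by simpa using hε.const_mul (K : ℝ)
    exact this.eventually (ge_mem_nhds (by norm_num))
  rw [tendsto_iff_norm_sub_tendsto_zero]
  -- absorb the `ε k * ‖z k - zb‖` part of the error into the left-hand side
  refine squeeze_zero' (.of_forall fun k => norm_nonneg _)
    (hz.and (hbound.and hsmall) |>.mono fun k ⟨hzk, hbk, hsk⟩ => ?_)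
    (show Tendsto (fun k => 2 * K * (δ k + ε k * ‖zb‖)) l (𝓝 0) by
      simpa using (hδ.add (hε.mul_const ‖zb‖)).const_mul (2 * (K : ℝ)))
  have h1 := hC _ (W.sub_mem hzk hzb)
  rw [map_sub] at h1
  have hKε : 0 ≤ K * ε k := mul_nonneg K.2 (hε0 k)
  have h2 : K * ε k * ‖z k‖ ≤ K * ε k * (‖z k - zb‖ + ‖zb‖) :=
    mul_le_mul_of_nonneg_left (norm_le_norm_sub_add _ _) hKε
  have h3 : K * ε k * ‖z k - zb‖ ≤ 1 / 2 * ‖z k - zb‖ :=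
    mul_le_mul_of_nonneg_right hsk (norm_nonneg _)
  nlinarith [mul_le_mul_of_nonneg_left hbk K.2]

theorem eventually_eq_imp_eq_of_tendsto {ι α β : Type*} [Finite ι] [TopologicalSpace β]
    [T1Space β] {l : Filter α} {φ : α → ι → β} {φb : ι → β} (h : Tendsto φ l (𝓝 φb)) (c : β) :
    ∀ᶠ k in l, ∀ i, φ k i = c → φb i = c := by
  refine eventually_all.2 fun i => ?_
  by_cases hi : φb i = c
  · exact .of_forall fun _ _ => hi
  · exact ((tendsto_pi_nhds.1 h i).eventually_ne hi).mono fun _ hk hc => absurd hc hk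

theorem continuous_grad {f : Vec n → ℝ} (hf : ContDiff ℝ 1 f) : Continuous (grad f) :=
  continuous_pi fun _ => (hf.continuous_fderiv one_ne_zero).clm_apply continuous_const

theorem abs_mul_eq_abs_div_mul (e a b : ℝ) (hb : b ≠ 0) : |e * a| = |a / b| * |e * b| := by
  rw [abs_mul, abs_mul, abs_div]
  field_simp [abs_ne_zero.2 hb]

theorem sum_smul_ex (S : Finset (Fin n)) (u : Fin n → ℝ) :
    ∑ i ∈ S, u i • ex i = ((fun j => if j ∈ S then u j else 0, 0) : Vec n × Vec n) := by
  ext j <;> simp [ex, Prod.fst_sum, Prod.snd_sum, Finset.sum_apply, Pi.single_apply]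

theorem sum_smul_ey (S : Finset (Fin n)) (u : Fin n → ℝ) :
    ∑ i ∈ S, u i • ey i = ((0, fun j => if j ∈ S then u j else 0) : Vec n × Vec n) := by
  ext j <;> simp [ey, Prod.fst_sum, Prod.snd_sum, Finset.sum_apply, Pi.single_apply]

theorem sum_smul_hvec (x y : Vec n) (S : Finset (Fin n)) (u : Fin n → ℝ) :
    ∑ i ∈ S, u i • hvec x y i = ((fun j => if j ∈ S then u j * y j else 0,
      fun j => if j ∈ S then u j * x j else 0) : Vec n × Vec n) := by
  ext j <;> simp [hvec, Prod.fst_sum, Prod.snd_sum, Finset.sum_apply, Pi.single_apply]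

def restrictPair (S₁ S₂ : Finset (Fin n)) (w : Vec n × Vec n) : Vec n × Vec n :=
  (fun i => if i ∈ S₁ then w.1 i else 0, fun i => if i ∈ S₂ then w.2 i else 0)

theorem norm_sub_restrictPair_le {S₁ S₂ : Finset (Fin n)} {w : Vec n × Vec n} {ρ : ℝ}
    (hρ : 0 ≤ ρ) (h₁ : ∀ i ∉ S₁, i ∈ S₂ ∧ |w.1 i| ≤ ρ * |w.2 i|)
    (h₂ : ∀ i ∉ S₂, i ∈ S₁ ∧ |w.2 i| ≤ ρ * |w.1 i|) :
    ‖w - restrictPair S₁ S₂ w‖ ≤ ρ * ‖restrictPair S₁ S₂ w‖ := by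
  have hw : ∀ i, ‖(restrictPair S₁ S₂ w).1 i‖ ≤ ‖restrictPair S₁ S₂ w‖ ∧
      ‖(restrictPair S₁ S₂ w).2 i‖ ≤ ‖restrictPair S₁ S₂ w‖ := fun i =>
    ⟨(norm_le_pi_norm _ i).trans (norm_fst_le _), (norm_le_pi_norm _ i).trans (norm_snd_le _)⟩
  rw [Prod.norm_def]
  refine max_le ((pi_norm_le_iff_of_nonneg (by positivity)).2 fun i => ?_)
    ((pi_norm_le_iff_of_nonneg (by positivity)).2 fun i => ?_)
  · by_cases hi : i ∈ S₁
    · simp only [restrictPair, hi, if_true, Prod.fst_sub, Pi.sub_apply, sub_self, norm_zero]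
      positivity
    obtain ⟨hi₂, hb⟩ := h₁ i hi
    have := (hw i).2
    simp only [restrictPair, hi, hi₂, if_true, if_false, Prod.fst_sub, Pi.sub_apply, sub_zero,
      Real.norm_eq_abs] at this ⊢
    exact hb.trans (by gcongr)
  · by_cases hi : i ∈ S₂
    · simp only [restrictPair, hi, if_true, Prod.snd_sub, Pi.sub_apply, sub_self, norm_zero]
      positivity
    obtain ⟨hi₁, hb⟩ := h₂ i hi
    have := (hw i).1
    simp only [restrictPair, hi, hi₁, if_true, if_false, Prod.snd_sub, Pi.sub_apply, sub_zero,
      Real.norm_eq_abs] at this ⊢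
    exact hb.trans (by gcongr)

theorem mem_a10_of_notMem {xb yb : Vec n} {i : Fin n} (hxy : xb i * yb i = 0) (hy : 0 ≤ yb i)
    (hi : i ∉ a01 xb yb ∪ a00 xb yb) : i ∈ a10 xb yb := by
  simp only [a01, a00, a10, Finset.mem_union, Finset.mem_filter, Finset.mem_univ, true_and,
    not_or, not_and] at hi ⊢
  have hx : xb i ≠ 0 := fun hx => hi.2 hx (le_antisymm (not_lt.1 (hi.1 hx)) hy)
  exact ⟨hx, (mul_eq_zero.1 hxy).resolve_left hx⟩

theorem mem_a01_of_notMem {xb yb : Vec n} {i : Fin n} (hxy : xb i * yb i = 0) (hy : 0 ≤ yb i)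
    (hi : i ∉ a10 xb yb ∪ a00 xb yb) : i ∈ a01 xb yb := by
  simp only [a01, a00, a10, Finset.mem_union, Finset.mem_filter, Finset.mem_univ, true_and,
    not_or, not_and] at hi ⊢
  have hy0 : yb i ≠ 0 := fun h => (em (xb i = 0)).elim (hi.2 · h) (hi.1 · h)
  exact ⟨(mul_eq_zero.1 hxy).resolve_right hy0, lt_of_le_of_ne hy (Ne.symm hy0)⟩

def crossRatio (xb yb x y : Vec n) : ℝ :=
  ∑ i ∈ a10 xb yb, |y i / x i| + ∑ i ∈ a01 xb yb, |x i / y i|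

theorem crossRatio_nonneg (xb yb x y : Vec n) : 0 ≤ crossRatio xb yb x y := by
  unfold crossRatio; positivity

theorem tendsto_crossRatio {ι : Type*} {l : Filter ι} {X Y : ι → Vec n} {xb yb : Vec n}
    (hX : Tendsto X l (𝓝 xb)) (hY : Tendsto Y l (𝓝 yb)) :
    Tendsto (fun k => crossRatio xb yb (X k) (Y k)) l (𝓝 0) := by
  have h10 : ∀ i ∈ a10 xb yb, Tendsto (fun k => |Y k i / X k i|) l (𝓝 0) := fun i hi => by
    obtain ⟨hx, hy⟩ := (Finset.mem_filter.1 hi).2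
    simpa [hy] using ((hY.apply_nhds i).div (hX.apply_nhds i) hx).abs
  have h01 : ∀ i ∈ a01 xb yb, Tendsto (fun k => |X k i / Y k i|) l (𝓝 0) := fun i hi => by
    obtain ⟨hx, hy⟩ := (Finset.mem_filter.1 hi).2
    simpa [hx] using ((hX.apply_nhds i).div (hY.apply_nhds i) hy.ne').abs
  simpa [crossRatio] using (tendsto_finsetSum _ h10).add (tendsto_finsetSum _ h01)

def SMult.eta (t : ℝ) (x y : Vec n) (N : SMult n P Q) (i : Fin n) : ℝ :=
  (if i ∈ Hge t x y then N.etaGe i else 0) - (if i ∈ Hle t x y then N.etaLe i else 0)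

theorem SMult.eta_eq_zero {t : ℝ} {x y : Vec n} {N : SMult n P Q} {i : Fin n}
    (hi : i ∉ Hact t x y) : N.eta t x y i = 0 := by
  simp only [Hact, Finset.mem_union, not_or] at hi
  simp [SMult.eta, hi.1, hi.2]

variable [Fintype P] [Fintype Q]

/-- Multipliers of the gradients of `h` and `g` and of `∑ yᵢ ≥ n - s`, together with one vector
of `ℝ²ⁿ` collecting the multipliers of all constraints that involve a single coordinate. -/
abbrev Mult (n : ℕ) (P Q : Type*) := (P → ℝ) × (Q → ℝ) × ℝ × (Vec n × Vec n)

theorem norm_snd_snd_snd_le (z : Mult n P Q) : ‖z.2.2.2‖ ≤ ‖z‖ :=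
  (norm_snd_le _).trans ((norm_snd_le _).trans (norm_snd_le z))

def combine (a : P → Vec n) (b : Q → Vec n) : Mult n P Q →ₗ[ℝ] Vec n × Vec n where
  toFun z := ∑ p, z.1 p • ((a p, 0) : Vec n × Vec n) + ∑ q, z.2.1 q • ((b q, 0) : Vec n × Vec n)
    + z.2.2.1 • eAll + z.2.2.2
  map_add' z z' := by
    simp only [Prod.fst_add, Prod.snd_add, Pi.add_apply, add_smul, Finset.sum_add_distrib]
    abel
  map_smul' c z := by
    simp only [Prod.smul_fst, Prod.smul_snd, Pi.smul_apply, smul_eq_mul, mul_smul,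
      ← Finset.smul_sum, RingHom.id_apply, smul_add]

theorem norm_combine_sub_le (a a' : P → Vec n) (b b' : Q → Vec n) (z : Mult n P Q) :
    ‖combine a b z - combine a' b' z‖ ≤
      (∑ p, ‖a p - a' p‖ + ∑ q, ‖b q - b' q‖) * ‖z‖ := by
  have hdiff : combine a b z - combine a' b' z =
      ∑ p, z.1 p • ((a p - a' p, 0) : Vec n × Vec n)
        + ∑ q, z.2.1 q • ((b q - b' q, 0) : Vec n × Vec n) := by
    have hpair : ∀ v w : Vec n, ((v - w, 0) : Vec n × Vec n) = (v, 0) - (w, 0) := by simp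
    simp only [combine, LinearMap.coe_mk, AddHom.coe_mk, hpair, smul_sub, Finset.sum_sub_distrib]
    abel
  have hlam : ∀ p, ‖z.1 p‖ ≤ ‖z‖ := fun p => (norm_le_pi_norm z.1 p).trans (norm_fst_le z)
  have hmu : ∀ q, ‖z.2.1 q‖ ≤ ‖z‖ := fun q =>
    (norm_le_pi_norm z.2.1 q).trans ((norm_fst_le z.2).trans (norm_snd_le z))
  rw [hdiff, add_mul, Finset.sum_mul, Finset.sum_mul]
  refine (norm_add_le _ _).trans (add_le_add ?_ ?_) <;>
    refine (norm_sum_le _ _).trans (Finset.sum_le_sum fun i _ => ?_) <;>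
    rw [norm_smul, Prod.norm_mk, norm_zero, max_eq_left (norm_nonneg _), mul_comm] <;>
    gcongr
  exacts [hlam i, hmu i]

abbrev gradMap (D : Setting n P Q) (x : Vec n) : Mult n P Q →ₗ[ℝ] Vec n × Vec n :=
  combine (fun p => grad (D.h p) x) (fun q => grad (D.g q) x)

def admissible (D : Setting n P Q) (xb yb : Vec n) : Submodule ℝ (Mult n P Q) where
  carrier := {z | (∀ q ∉ Q0 D xb, z.2.1 q = 0) ∧ ((∑ i, yb i) ≠ n - D.s → z.2.2.1 = 0) ∧
    (∀ i ∉ a01 xb yb ∪ a00 xb yb, z.2.2.2.1 i = 0) ∧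
    (∀ i ∉ a10 xb yb ∪ a00 xb yb ∪ Eact D yb, z.2.2.2.2 i = 0)}
  add_mem' := by
    rintro z z' ⟨h1, h2, h3, h4⟩ ⟨h1', h2', h3', h4'⟩
    refine ⟨fun q hq => ?_, fun h => ?_, fun i hi => ?_, fun i hi => ?_⟩ <;>
      simp_all
  zero_mem' := by simp
  smul_mem' := by
    rintro c z ⟨h1, h2, h3, h4⟩
    refine ⟨fun q hq => ?_, fun h => ?_, fun i hi => ?_, fun i hi => ?_⟩ <;>
      simp_all

theorem gradMap_injOn_admissible {D : Setting n P Q} {xb yb : Vec n} (hL : MPOC_LICQ D xb yb) :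
    ∀ z ∈ admissible D xb yb, gradMap D xb z = 0 → z = 0 := by
  rintro ⟨lam, mu, m, w1, w2⟩ ⟨h1, h2, h3, h4⟩ h0
  dsimp only at h1 h2 h3 h4
  have hdisj : ∀ i ∈ Eact D yb, i ∉ a10 xb yb ∪ a00 xb yb := by
    intro i hE h
    simp only [Eact, a10, a00, Finset.mem_union, Finset.mem_filter, Finset.mem_univ,
      true_and] at hE h
    linarith [D.hεpos, h.elim (·.2) (·.2)]
  have hsum : ∑ q ∈ Q0 D xb, mu q • ((grad (D.g q) xb, 0) : Vec n × Vec n) =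
      ∑ q, mu q • ((grad (D.g q) xb, 0) : Vec n × Vec n) :=
    Finset.sum_subset (Finset.subset_univ _) fun q _ hq => by rw [h1 q hq, zero_smul]
  have hw : ((fun j => if j ∈ a01 xb yb ∪ a00 xb yb then w1 j else 0, 0) : Vec n × Vec n)
      + (0, fun j => if j ∈ Eact D yb then w2 j else 0)
      + (0, fun j => if j ∈ a10 xb yb ∪ a00 xb yb then w2 j else 0) = (w1, w2) := by
    ext i <;> simp only [Prod.fst_add, Prod.snd_add, Pi.add_apply,
      Pi.zero_apply, add_zero, zero_add]
    · split_ifs with hi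
      exacts [rfl, (h3 i hi).symm]
    · split_ifs with hE hi hi
      · exact absurd hi (hdisj i hE)
      · exact add_zero _
      · exact zero_add _
      · rw [add_zero]
        exact (h4 i (Finset.notMem_union.2 ⟨hi, hE⟩)).symm
  obtain ⟨c1, c2, c3, c4, c5, c6⟩ := hL lam mu w2 m w1 w2 h2 <| by
    rw [← h0, sum_smul_ex, sum_smul_ey, sum_smul_ey, hsum, ← hw]
    simp only [gradMap, combine, LinearMap.coe_mk, AddHom.coe_mk]
    abel
  simp only [Prod.mk_eq_zero]
  refine ⟨funext c1, funext fun q => ?_, c4, funext fun i => ?_, funext fun i => ?_⟩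
  · by_cases hq : q ∈ Q0 D xb
    exacts [c2 q hq, h1 q hq]
  · by_cases hi : i ∈ a01 xb yb ∪ a00 xb yb
    exacts [c5 i hi, h3 i hi]
  · by_cases hE : i ∈ Eact D yb
    · exact c3 i hE
    by_cases hi : i ∈ a10 xb yb ∪ a00 xb yb
    exacts [c6 i hi, h4 i (Finset.notMem_union.2 ⟨hi, hE⟩)]

def TMult.toMult (D : Setting n P Q) (x y : Vec n) (M : TMult n P Q) : Mult n P Q :=
  (M.lam, fun q => if q ∈ Q0 D x then M.mu1 q else 0, M.mu3,
    (fun i => (if i ∈ a01 x y then M.sig1 i else 0) + (if i ∈ a00 x y then M.rho1 i else 0),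
     fun i => (if i ∈ a10 x y then M.sig2 i else 0) + (if i ∈ a00 x y then M.rho2 i else 0)
       - (if i ∈ Eact D y then M.mu2 i else 0)))

theorem TMult.toMult_mem_admissible {D : Setting n P Q} {xb yb : Vec n} {M : TMult n P Q}
    (hM : M.mu3 * ((∑ i, yb i) - (n - D.s)) = 0) : M.toMult D xb yb ∈ admissible D xb yb := by
  refine ⟨fun q hq => if_neg hq, fun h => (mul_eq_zero.1 hM).resolve_right (sub_ne_zero.2 h),
    fun _ hi => ?_, fun _ hi => ?_⟩ <;> simp only [Finset.mem_union, not_or] at hi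
  · simp [TMult.toMult, hi.1, hi.2]
  · simp [TMult.toMult, hi.1.1, hi.1.2, hi.2]

theorem TStatEq.gradMap_toMult {D : Setting n P Q} {x y : Vec n} {M : TMult n P Q}
    (h : TStatEq D x y M) : gradMap D x (M.toMult D x y) = (grad D.f x, D.c) := by
  rw [h, Finset.sum_add_distrib, sum_smul_ex, sum_smul_ex, sum_smul_ey,
    sum_smul_ey, sum_smul_ey]
  simp only [gradMap, combine, TMult.toMult, LinearMap.coe_mk, AddHom.coe_mk]
  ext i <;> simp only [Prod.smul_mk, smul_zero, ite_smul, zero_smul, sum_ite_mem, univ_inter,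
    Prod.fst_add, Prod.snd_add, Prod.fst_sub, Prod.snd_sub, Prod.smul_fst, Prod.smul_snd,
    Pi.add_apply, Pi.sub_apply, Pi.smul_apply, smul_eq_mul, Prod.mk_add_mk, add_zero, zero_add,
    sub_zero] <;> ring

theorem TMult.toMult_apply_of_mem_a01 (D : Setting n P Q) {x y : Vec n} (M : TMult n P Q)
    {i : Fin n} (hi : i ∈ a01 x y) : (M.toMult D x y).2.2.2.1 i = M.sig1 i := by
  have : i ∉ a00 x y := fun h => ((Finset.mem_filter.1 hi).2.2.ne' (Finset.mem_filter.1 h).2.2)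
  simp [TMult.toMult, hi, this]

def SMult.toMult (D : Setting n P Q) (t : ℝ) (x y : Vec n) (N : SMult n P Q) : Mult n P Q :=
  (N.lam, fun q => if q ∈ Q0 D x then N.mu1 q else 0, N.mu3,
    (fun i => N.eta t x y i * y i,
     fun i => N.eta t x y i * x i + (if i ∈ Nact y then N.nu i else 0)
       - (if i ∈ Eact D y then N.mu2 i else 0)))

theorem KKTEq.gradMap_toMult {D : Setting n P Q} {t : ℝ} {x y : Vec n} {N : SMult n P Q}
    (h : KKTEq D t x y N) : gradMap D x (N.toMult D t x y) = (grad D.f x, D.c) := by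
  rw [h, sum_smul_hvec, sum_smul_hvec, sum_smul_ey, sum_smul_ey]
  simp only [gradMap, combine, SMult.toMult, SMult.eta, LinearMap.coe_mk, AddHom.coe_mk]
  ext i <;> simp only [Prod.smul_mk, smul_zero, ite_smul, zero_smul, sum_ite_mem, univ_inter,
    Prod.fst_add, Prod.snd_add, Prod.fst_sub, Prod.snd_sub, Prod.smul_fst, Prod.smul_snd,
    Pi.add_apply, Pi.sub_apply, Pi.smul_apply, smul_eq_mul, add_zero, sub_zero, Pi.zero_apply] <;>
    split_ifs <;> ring

def restrictMult (D : Setting n P Q) (xb yb : Vec n) (z : Mult n P Q) : Mult n P Q :=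
  (z.1, z.2.1, z.2.2.1,
    restrictPair (a01 xb yb ∪ a00 xb yb) (a10 xb yb ∪ a00 xb yb ∪ Eact D yb) z.2.2.2)

theorem restrictMult_mem_admissible {D : Setting n P Q} {xb yb : Vec n} {z : Mult n P Q}
    (hμ : ∀ q ∉ Q0 D xb, z.2.1 q = 0) (hm : (∑ i, yb i) ≠ n - D.s → z.2.2.1 = 0) :
    restrictMult D xb yb z ∈ admissible D xb yb :=
  ⟨hμ, hm, fun _ hi => if_neg hi, fun _ hi => if_neg hi⟩

theorem gradMap_restrictMult (D : Setting n P Q) (x xb yb : Vec n) (z : Mult n P Q) :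
    gradMap D x (restrictMult D xb yb z) =
      gradMap D x z - (z.2.2.2 - (restrictMult D xb yb z).2.2.2) := by
  simp only [gradMap, combine, restrictMult, LinearMap.coe_mk, AddHom.coe_mk]
  abel

theorem norm_toMult_sub_restrictMult_le {D : Setting n P Q} {xb yb x y : Vec n} {t : ℝ}
    {N : SMult n P Q} (hfeas : feasR D xb yb) (hE : Eact D y ⊆ Eact D yb)
    (hx : ∀ i ∈ a10 xb yb, x i ≠ 0) (hy : ∀ i ∈ a01 xb yb, y i ≠ 0) :
    ‖(N.toMult D t x y).2.2.2 - (restrictMult D xb yb (N.toMult D t x y)).2.2.2‖ ≤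
      crossRatio xb yb x y * ‖restrictMult D xb yb (N.toMult D t x y)‖ := by
  obtain ⟨-, -, -, hxy, hyb⟩ := hfeas
  have hnotE : ∀ i, yb i = 0 → i ∉ Eact D y := fun i hi hEi => by
    have := (Finset.mem_filter.1 (hE hEi)).2
    linarith [D.hεpos]
  refine (norm_sub_restrictPair_le (w := (N.toMult D t x y).2.2.2) (crossRatio_nonneg ..)
    (fun i hi => ?_) (fun i hi => ?_)).trans (mul_le_mul_of_nonneg_left
      (norm_snd_snd_snd_le (restrictMult D xb yb (N.toMult D t x y))) (crossRatio_nonneg ..))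
  · have hi10 := mem_a10_of_notMem (hxy i) (hyb i).1 hi
    refine ⟨Finset.mem_union_left _ (Finset.mem_union_left _ hi10), ?_⟩
    simp only [SMult.toMult]
    by_cases hy0 : y i = 0
    · simp only [hy0, mul_zero, abs_zero]
      exact mul_nonneg (crossRatio_nonneg ..) (abs_nonneg _)
    have hyb0 := (Finset.mem_filter.1 hi10).2.2
    rw [if_neg (by simpa [Nact] using hy0), if_neg (hnotE i hyb0), add_zero, sub_zero,
      abs_mul_eq_abs_div_mul _ _ _ (hx i hi10)]
    gcongr
    exact (Finset.single_le_sum (fun j _ => abs_nonneg (y j / x j)) hi10).trans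
      (le_add_of_nonneg_right (Finset.sum_nonneg fun j _ => abs_nonneg _))
  · simp only [Finset.mem_union, not_or] at hi
    have hi01 := mem_a01_of_notMem (hxy i) (hyb i).1 (Finset.notMem_union.2 hi.1)
    refine ⟨Finset.mem_union_left _ hi01, ?_⟩
    simp only [SMult.toMult]
    rw [if_neg (by simpa [Nact] using hy i hi01), if_neg (fun h => hi.2 (hE h)), add_zero,
      sub_zero, abs_mul_eq_abs_div_mul _ _ _ (hy i hi01)]
    gcongr
    exact (Finset.single_le_sum (fun j _ => abs_nonneg (x j / y j)) hi01).trans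
      (le_add_of_nonneg_left (Finset.sum_nonneg fun j _ => abs_nonneg _))

def constraintGradDist (D : Setting n P Q) (x xb : Vec n) : ℝ :=
  ∑ p, ‖grad (D.h p) x - grad (D.h p) xb‖ + ∑ q, ‖grad (D.g q) x - grad (D.g q) xb‖

theorem tendsto_constraintGradDist {ι : Type*} {l : Filter ι} (D : Setting n P Q)
    {X : ι → Vec n} {xb : Vec n} (hX : Tendsto X l (𝓝 xb)) :
    Tendsto (fun k => constraintGradDist D (X k) xb) l (𝓝 0) := by
  have h : ∀ {f : Vec n → ℝ}, ContDiff ℝ 2 f →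
      Tendsto (fun k => ‖grad f (X k) - grad f xb‖) l (𝓝 0) := fun hf =>
    tendsto_iff_norm_sub_tendsto_zero.1
      (((continuous_grad (hf.of_le (by norm_num))).tendsto xb).comp hX)
  simpa [constraintGradDist] using (tendsto_finsetSum _ fun p _ => h (D.hh p)).add
    (tendsto_finsetSum _ fun q _ => h (D.hg q))

theorem norm_gradMap_restrictMult_sub_le {D : Setting n P Q} {x xb yb : Vec n}
    {z zb : Mult n P Q} {ρ : ℝ} (hz : gradMap D x z = (grad D.f x, D.c))
    (hzb : gradMap D xb zb = (grad D.f xb, D.c))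
    (hρ : ‖z.2.2.2 - (restrictMult D xb yb z).2.2.2‖ ≤ ρ * ‖restrictMult D xb yb z‖) :
    ‖gradMap D xb (restrictMult D xb yb z) - gradMap D xb zb‖ ≤
      ‖grad D.f x - grad D.f xb‖ + (constraintGradDist D x xb + ρ) * ‖restrictMult D xb yb z‖ := by
  set z' := restrictMult D xb yb z
  have hf : ((grad D.f x, D.c) : Vec n × Vec n) - (grad D.f xb, D.c) =
      (grad D.f x - grad D.f xb, 0) := by simp
  have e : gradMap D xb z' - gradMap D xb zb = ((grad D.f x - grad D.f xb, 0) : Vec n × Vec n)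
      - (gradMap D x z' - gradMap D xb z') - (z.2.2.2 - z'.2.2.2) := by
    rw [← hf, ← hz, ← hzb, gradMap_restrictMult D x xb yb z]
    abel
  calc ‖gradMap D xb z' - gradMap D xb zb‖
      ≤ ‖((grad D.f x - grad D.f xb, 0) : Vec n × Vec n)‖ + ‖gradMap D x z' - gradMap D xb z'‖
        + ‖z.2.2.2 - z'.2.2.2‖ := by
        rw [e]
        exact (norm_sub_le _ _).trans (add_le_add_left (norm_sub_le _ _) _)
    _ ≤ ‖grad D.f x - grad D.f xb‖ + constraintGradDist D x xb * ‖z'‖ + ρ * ‖z'‖ := by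
        gcongr
        · simp
        · exact norm_combine_sub_le _ _ _ _ z'
    _ = _ := by ring

theorem tendsto_restrictMult_toMult {ι : Type*} {l : Filter ι} {D : Setting n P Q}
    {t : ι → ℝ} {X Y : ι → Vec n} {N : ι → SMult n P Q} {xb yb : Vec n} {Mb : TMult n P Q}
    (hT : TStatAt D xb yb Mb) (hL : MPOC_LICQ D xb yb)
    (hN : ∀ k, KKTAt D (t k) (X k) (Y k) (N k))
    (hX : Tendsto X l (𝓝 xb)) (hY : Tendsto Y l (𝓝 yb)) :
    Tendsto (fun k => restrictMult D xb yb ((N k).toMult D (t k) (X k) (Y k))) l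
      (𝓝 (Mb.toMult D xb yb)) := by
  obtain ⟨hfeas, -, -, -, hmu3, -, hTS⟩ := hT
  have hcompl : ∀ k, (N k).mu3 * ((∑ i, Y k i) - (n - D.s)) = 0 := fun k => (hN k).2.2.2.2.1
  have hKKT : ∀ k, KKTEq D (t k) (X k) (Y k) (N k) := fun k => (hN k).2.2.2.2.2.2.2.2
  refine tendsto_of_norm_map_sub_le (gradMap_injOn_admissible hL)
    (tendsto_iff_norm_sub_tendsto_zero.1
      (((continuous_grad (D.hf.of_le (by norm_num))).tendsto xb).comp hX))
    (by simpa using (tendsto_constraintGradDist D hX).add (tendsto_crossRatio hX hY))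
    (fun k => add_nonneg (by unfold constraintGradDist; positivity) (crossRatio_nonneg ..))
    ?_ (TMult.toMult_mem_admissible hmu3) ?_
  · have hQ := eventually_eq_imp_eq_of_tendsto (φ := fun k q => D.g q (X k))
      (tendsto_pi_nhds.2 fun q => ((D.hg q).continuous.tendsto xb).comp hX) 0
    have hsum : ∀ᶠ k in l, (∑ i, yb i) ≠ n - D.s → (∑ i, Y k i) ≠ n - D.s := by
      by_cases hs : (∑ i, yb i) = n - D.s
      · exact .of_forall fun _ h => absurd hs h
      · exact ((tendsto_finsetSum _ fun i _ => hY.apply_nhds i).eventually_ne hs).mono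
          fun _ hk _ => hk
    filter_upwards [hQ, hsum] with k hQk hsk
    refine restrictMult_mem_admissible (fun q hq => if_neg fun h => hq ?_)
      fun h => (mul_eq_zero.1 (hcompl k)).resolve_right (sub_ne_zero.2 (hsk h))
    simpa [Q0] using hQk q (by simpa [Q0] using h)
  · filter_upwards [eventually_eq_imp_eq_of_tendsto hY (1 + D.ε),
      eventually_eq_imp_eq_of_tendsto hX 0, eventually_eq_imp_eq_of_tendsto hY 0]
      with k hEk hxk hyk
    refine norm_gradMap_restrictMult_sub_le (hKKT k).gradMap_toMult
      hTS.gradMap_toMult (norm_toMult_sub_restrictMult_le hfeas ?_ ?_ ?_)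
    · intro i hi
      simpa [Eact] using hEk i (by simpa [Eact] using hi)
    · exact fun i hi h => (Finset.mem_filter.1 hi).2.1 (hxk i h)
    · exact fun i hi h => (Finset.mem_filter.1 hi).2.2.ne' (hyk i h)

theorem statement18_general {n : ℕ} {P Q : Type*} [Fintype P] [Fintype Q]
    (D : Setting n P Q) (t : ℕ → ℝ)
    (X Y : ℕ → Vec n) (hK : ∀ k, KKT D (t k) (X k) (Y k))
    (xb yb : Vec n)
    (hconv : Filter.Tendsto (fun k => ((X k, Y k) : Vec n × Vec n))
      Filter.atTop (nhds (xb, yb)))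
    (Mb : TMult n P Q) (hnd : NondegTStatAt D xb yb Mb) :
    ∃ K : ℕ, ∀ k ≥ K,
      a01 xb yb \ Hact (t k) (X k) (Y k) ⊆
        (a01 xb yb).filter (fun i => Mb.sig1 i = 0) := by
  obtain ⟨hT, hL, -⟩ := hnd
  choose N hN using hK
  have hz := tendsto_restrictMult_toMult hT hL hN hconv.fst_nhds hconv.snd_nhds
  have hH : ∀ i, ∀ᶠ k in atTop, i ∈ a01 xb yb → Mb.sig1 i ≠ 0 → i ∈ Hact (t k) (X k) (Y k) := by
    intro i
    by_cases hi : i ∈ a01 xb yb ∧ Mb.sig1 i ≠ 0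
    · have hlim := hz.snd_nhds.snd_nhds.snd_nhds.fst_nhds.apply_nhds i
      rw [TMult.toMult_apply_of_mem_a01 D Mb hi.1] at hlim
      filter_upwards [hlim.eventually_ne hi.2] with k hk _ _
      by_contra hiH
      simp [restrictMult, restrictPair, SMult.toMult, SMult.eta_eq_zero hiH] at hk
    · exact .of_forall fun _ h₁ h₂ => absurd ⟨h₁, h₂⟩ hi
  obtain ⟨K, hK⟩ := eventually_atTop.1 (eventually_all.2 hH)
  refine ⟨K, fun k hk i hi => ?_⟩
  simp only [Finset.mem_sdiff, Finset.mem_filter] at hi ⊢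
  exact ⟨hi.1, by_contra fun h => hi.2 (hK k hk i hi.1 h)⟩

/-- Step 3 of the proof of Theorem 3: eventually
a01(x̄,ȳ) \ H(x^k,y^k) ⊆ {i ∈ a01(x̄,ȳ) : σ̄₁ᵢ = 0}; in particular every
i ∈ a01(x̄,ȳ) with σ̄₁ᵢ ≠ 0 eventually belongs to H(x^k,y^k). -/
theorem statement18 {n : ℕ} {P Q : Type*} [Fintype P] [Fintype Q]
    (D : Setting n P Q) (t : ℕ → ℝ) (htpos : ∀ k, 0 < t k)
    (ht0 : Filter.Tendsto t Filter.atTop (nhds 0))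
    (X Y : ℕ → Vec n) (hK : ∀ k, KKT D (t k) (X k) (Y k))
    (xb yb : Vec n)
    (hconv : Filter.Tendsto (fun k => ((X k, Y k) : Vec n × Vec n))
      Filter.atTop (nhds (xb, yb)))
    (Mb : TMult n P Q) (hnd : NondegTStatAt D xb yb Mb) :
    ∃ K : ℕ, ∀ k ≥ K,
      a01 xb yb \ Hact (t k) (X k) (Y k) ⊆
        (a01 xb yb).filter (fun i => Mb.sig1 i = 0) :=
  statement18_general D t X Y hK xb yb hconv Mb hnd

end Scholtes
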